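/- arXiv:2004.02491 — 2 statements merged into one kernel-verified Lean document; each statement's English description precedes it below -/
import Mathlib

section
/- Let s ≥ 1, ν ≥ 0 be integers and b ≥ 2. For d = (d_1,...,d_s) ∈ ℕ_0^s define K_d = {a ∈ ℕ_0^s : a_j < b^{d_j} for all j}, and K_ν = ⋃_{|d|=ν} K_d where |d| = d_1+...+d_s. Then for every a ∈ ℕ_0^s, the indicator 1_{a ∈ K_ν} equals ∑_{q=0}^{s-1} (-1)^q C(s-1,q) ∑_{d ∈ ℕ_0^s, |d| = ν-q} 1_{a ∈ K_d}, where inner sums with ν-q < 0 are defined to be 0. -/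
open scoped Classical

/-!
Write `m_j` for the number of base-`b` digits of `a_j`, so that `a ∈ K_d ↔ m ≤ d`. Then
`a ∈ K_ν ↔ |m| ≤ ν`, and the `d` with `|d| = k` and `a ∈ K_d` are the translates `m + e` with
`|e| = k - |m|`, of which there are `C(k - |m| + s - 1, s - 1)`. With `t = ν - |m|` the right-hand
side becomes `∑_q (-1)^q C(s-1,q) C(t + s - 1 - q, s - 1)`, the `(s-1)`-st forward difference of
`x ↦ C(x, s-1)` at `t`, which is `C(t, 0) = 1`.
-/

open Finset

theorem sum_range_alternating_choose_mul_choose (n t : ℕ) :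
    ∑ q ∈ range (n + 1), (-1 : ℤ) ^ q * n.choose q * (t + n - q).choose n = 1 := by
  have h := congrFun (fwdDiff_iter_choose 0 n) t
  rw [fwdDiff_iter_eq_sum_shift, ← sum_range_reflect] at h
  simp only [add_zero, Nat.choose_zero_right, Nat.cast_one, smul_eq_mul] at h
  refine (sum_congr rfl fun q hq => ?_).trans h
  have hq : q ≤ n := Nat.lt_succ_iff.mp (mem_range.mp hq)
  rw [Nat.add_sub_cancel, Nat.sub_sub_self hq, Nat.choose_symm hq, Nat.add_sub_assoc hq, mul_one]

theorem card_antidiagonalTuple (n k : ℕ) :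
    #(Nat.antidiagonalTuple (n + 1) k) = (k + n).choose n := by
  rw [← piAntidiag_univ_fin_eq_antidiagonalTuple, ← map_sym_eq_piAntidiag, card_map,
    show (univ : Finset (Fin (n + 1))).sym k = univ by ext; simp,
    card_univ, Sym.card_sym_fin_eq_multichoose, Nat.multichoose_eq,
    show n + 1 + k - 1 = k + n by omega, Nat.choose_symm_add]

theorem exists_sum_eq_and_le_iff {ι : Type*} [Fintype ι] [Nonempty ι] (m : ι → ℕ) (ν : ℕ) :
    (∃ d : ι → ℕ, ∑ i, d i = ν ∧ m ≤ d) ↔ ∑ i, m i ≤ ν := by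
  refine ⟨fun ⟨d, hd, hmd⟩ => hd ▸ sum_le_sum fun i _ => hmd i, fun h => ?_⟩
  obtain ⟨i⟩ := ‹Nonempty ι›
  refine ⟨m + Pi.single i (ν - ∑ i, m i), ?_, le_self_add⟩
  simp only [Pi.add_apply, sum_add_distrib, sum_pi_single', mem_univ, if_true]
  omega

theorem card_filter_le_antidiagonalTuple (s k : ℕ) (m : Fin s → ℕ) :
    #{d ∈ Nat.antidiagonalTuple s k | m ≤ d} =
      if ∑ i, m i ≤ k then #(Nat.antidiagonalTuple s (k - ∑ i, m i)) else 0 := by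
  split_ifs with h
  · refine card_nbij' (· - m) (· + m) (fun d hd => ?_) (fun e he => ?_)
      (fun d hd => tsub_add_cancel_of_le (mem_filter.mp hd).2) (fun e _ => add_tsub_cancel_right e m)
    · simp only [coe_filter, Set.mem_ofPred_eq, Nat.mem_antidiagonalTuple, mem_coe] at hd ⊢
      rw [← hd.1, ← sum_tsub_distrib _ fun i _ => hd.2 i]
      rfl
    · simp only [coe_filter, Set.mem_ofPred_eq, Nat.mem_antidiagonalTuple, mem_coe] at he ⊢
      refine ⟨?_, le_add_self⟩
      simp only [Pi.add_apply, sum_add_distrib, he]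
      omega
  · refine card_eq_zero.mpr (filter_eq_empty_iff.mpr fun d hd hmd => h ?_)
    rw [← Nat.mem_antidiagonalTuple.mp hd]
    exact sum_le_sum fun i _ => hmd i

/-- Combination principle for indicator functions: for `a ∈ ℕ₀^s`,
`1_{a ∈ K_ν} = ∑_{q=0}^{s-1} (-1)^q C(s-1,q) ∑_{|d| = ν-q} 1_{a ∈ K_d}`,
where `K_d = {a : ∀ j, a j < b ^ d j}` and `K_ν = ⋃_{|d|=ν} K_d`,
and inner sums with `ν - q < 0` are `0`. -/
theorem indicator_combination_principle (b s ν : ℕ) (hb : 2 ≤ b) (hs : 1 ≤ s)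
    (a : Fin s → ℕ) :
    (if ∃ d : Fin s → ℕ, (∑ j, d j) = ν ∧ ∀ j, a j < b ^ d j then (1 : ℤ) else 0) =
      ∑ q ∈ Finset.range s, (-1 : ℤ) ^ q * ((s - 1).choose q : ℤ) *
        (if q ≤ ν then
          ∑ d ∈ Finset.Nat.antidiagonalTuple s (ν - q),
            (if ∀ j, a j < b ^ d j then (1 : ℤ) else 0)
         else 0) := by
  obtain ⟨n, rfl⟩ := Nat.exists_eq_add_of_le' hs
  set m : Fin (n + 1) → ℕ := fun j => (b.digits (a j)).length
  have hK (d : Fin (n + 1) → ℕ) : (∀ j, a j < b ^ d j) ↔ m ≤ d :=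
    forall_congr' fun j => (Nat.digits_length_le_iff hb (a j)).symm
  simp_rw [hK, exists_sum_eq_and_le_iff, sum_boole, card_filter_le_antidiagonalTuple,
    card_antidiagonalTuple, Nat.add_sub_cancel]
  split_ifs with hν
  · refine ((sum_congr rfl fun q hq => ?_).trans
      (sum_range_alternating_choose_mul_choose n (ν - ∑ j, m j))).symm
    have hq : q ≤ n := Nat.lt_succ_iff.mp (mem_range.mp hq)
    congr 1
    split_ifs
    · congr 2; omega
    all_goals exact_mod_cast (Nat.choose_eq_zero_of_lt (by omega)).symm
  · refine (sum_eq_zero fun q _ => ?_).symm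
    split_ifs <;> omega
end

section
/- Define μ_α(k) for k ∈ ℕ with base-b representation k = κ'_1 b^{a_1 - 1} + ... + κ'_r b^{a_r - 1} (nonzero digits κ'_i, positions a_1 > a_2 > ... > a_r ≥ 1) by μ_α(k) = a_1 + ... + a_{min(α, r)}, and μ_α(0) = 0. Then for all k, k' ∈ ℕ_0 and α ≥ 1, μ_α(k ⊕_b k') ≥ μ_α(k) - α·μ_1(k'), where ⊕_b is digitwise addition modulo b of base-b digit vectors; in particular if k' < b^ν then μ_α(k ⊕_b k') ≥ μ_α(k) - αν. -/
/-!
Digits of `k ⊕_b k'` at positions above `μ_1(k')` are those of `k`. Of the (at most `α`)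
top nonzero positions of `k`, those above `μ_1(k')` therefore stay nonzero positions of
`k ⊕_b k'`, so their sum is at most `μ_α(k ⊕_b k')`, and each of the others is at most
`μ_1(k')`. If `k' < b^ν`, all nonzero positions of `k'` are at most `ν`, and the same
argument applies with `ν` in place of `μ_1(k')`.
-/

/-- The positions (counted from `1`) of the nonzero base-`b` digits of `k`. -/
def nzpos (b k : ℕ) : Finset ℕ :=
  (Finset.range (k + 1)).filter (fun a => 1 ≤ a ∧ k / b ^ (a - 1) % b ≠ 0)

/-- `μ_α(k)`: the sum of the positions of the `min(α, r)` most significant nonzero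
base-`b` digits of `k` (and `μ_α(0) = 0`). -/
def mua (b α k : ℕ) : ℕ :=
  (((nzpos b k).sort (· ≥ ·)).take α).sum

/-- Digitwise addition `⊕_b` modulo `b` of the base-`b` digit vectors of `k` and `k'`. -/
def nadd (b k k' : ℕ) : ℕ :=
  ∑ a ∈ Finset.range (k + k' + 1), ((k / b ^ a % b + k' / b ^ a % b) % b) * b ^ a

open Finset

section TopSum

variable {M : Type*} [AddCommMonoid M] [LinearOrder M]

theorem Finset.exists_subset_card_le_sum_eq_sum_take_sort (X : Finset M) (α : ℕ) :
    ∃ Z ⊆ X, #Z ≤ α ∧ ∑ x ∈ Z, x = ((X.sort (· ≥ ·)).take α).sum := by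
  have hsub : ((X.sort (· ≥ ·)).take α).Sublist (X.sort (· ≥ ·)) := List.take_sublist α _
  have hnd := hsub.nodup (sort_nodup _ _)
  refine ⟨_, fun x hx => (mem_sort _).mp (hsub.subset (List.mem_toFinset.mp hx)), ?_, ?_⟩
  · rw [List.toFinset_card_of_nodup hnd]
    exact List.length_take_le _ _
  · rw [List.sum_toFinset (fun x => x) hnd, List.map_id']

variable [IsOrderedAddMonoid M] [CanonicallyOrderedAdd M]

theorem List.Sublist.sum_le_sum_take {l z : List M} (hz : z.Sublist l)
    (hl : l.Pairwise (· ≥ ·)) {n : ℕ} (hn : z.length ≤ n) : z.sum ≤ (l.take n).sum := by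
  induction l generalizing z n with
  | nil => simp [List.sublist_nil.mp hz]
  | cons x t ih =>
    obtain _ | ⟨y, z'⟩ := z
    · simp
    obtain ⟨m, rfl⟩ : ∃ m, n = m + 1 := Nat.exists_eq_add_one.mpr (by simp at hn; omega)
    have hyx : y ≤ x := by
      rcases List.mem_cons.mp (hz.subset List.mem_cons_self) with rfl | hy
      · exact le_rfl
      · exact List.rel_of_pairwise_cons hl hy
    simp only [List.sum_cons, List.take_succ_cons]
    exact add_le_add hyx (ih hz.tail hl.of_cons (by simpa using hn))

theorem Finset.sum_le_sum_take_sort {X Z : Finset M} (hZX : Z ⊆ X) {α : ℕ} (hZ : #Z ≤ α) :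
    ∑ x ∈ Z, x ≤ ((X.sort (· ≥ ·)).take α).sum := by
  have hsub : (Z.sort (· ≥ ·)).Sublist (X.sort (· ≥ ·)) := by
    refine List.sublist_of_subperm_of_pairwise ?_ (pairwise_sort _ _) (pairwise_sort _ _)
    rw [← Multiset.coe_le, sort_eq, sort_eq]
    exact val_le_iff.2 hZX
  have hsum : (Z.sort (· ≥ ·)).sum = ∑ x ∈ Z, x := by
    rw [sum_eq_multiset_sum, Multiset.map_id', ← Multiset.sum_coe, sort_eq]
  rw [← hsum]
  exact hsub.sum_le_sum_take (pairwise_sort _ _) (by rwa [length_sort])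

end TopSum

theorem Nat.pow_le_of_div_pow_mod_ne_zero {b n e : ℕ} (h : n / b ^ e % b ≠ 0) : b ^ e ≤ n := by
  by_contra! hlt
  simp [Nat.div_eq_of_lt hlt] at h

theorem Nat.sum_mul_pow_div_pow_mod {b : ℕ} (hb : 0 < b) {c : ℕ → ℕ} (hc : ∀ a, c a < b)
    {N e : ℕ} (he : e < N) : (∑ a ∈ range N, c a * b ^ a) / b ^ e % b = c e := by
  have shift : ∀ (c : ℕ → ℕ) (M : ℕ),
      ∑ a ∈ range (M + 1), c a * b ^ a = c 0 + b * ∑ a ∈ range M, c (a + 1) * b ^ a := by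
    intro c M
    rw [sum_range_succ', pow_zero, mul_one, add_comm, mul_sum]
    exact congrArg _ (sum_congr rfl fun a _ => by ring)
  obtain ⟨M, rfl⟩ : ∃ M, N = M + 1 := Nat.exists_eq_add_one.mpr (by omega)
  rw [shift]
  induction e generalizing c M with
  | zero => simp [Nat.mod_eq_of_lt (hc 0)]
  | succ e ih =>
    obtain ⟨L, rfl⟩ : ∃ L, M = L + 1 := Nat.exists_eq_add_one.mpr (by omega)
    rw [pow_succ', ← Nat.div_div_eq_div_mul, Nat.add_mul_div_left _ _ hb,
      Nat.div_eq_of_lt (hc 0), zero_add, shift]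
    exact ih (fun a => hc (a + 1)) _ (by omega)

theorem mem_nzpos {b : ℕ} (hb : 1 < b) {n a : ℕ} :
    a ∈ nzpos b n ↔ 1 ≤ a ∧ n / b ^ (a - 1) % b ≠ 0 := by
  simp only [nzpos, mem_filter, mem_range, and_iff_right_iff_imp, and_imp]
  intro _ h
  have := Nat.pow_le_of_div_pow_mod_ne_zero h
  have := Nat.lt_pow_self (n := a - 1) hb
  omega

theorem le_of_mem_nzpos_of_lt_pow {b n a ν : ℕ} (hb : 1 < b) (ha : a ∈ nzpos b n)
    (hn : n < b ^ ν) : a ≤ ν := by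
  rw [mem_nzpos hb] at ha
  have := (Nat.pow_lt_pow_iff_right hb).mp ((Nat.pow_le_of_div_pow_mod_ne_zero ha.2).trans_lt hn)
  omega

theorem le_mua_one_of_mem_nzpos {b n a : ℕ} (ha : a ∈ nzpos b n) : a ≤ mua b 1 n := by
  simpa [mua] using sum_le_sum_take_sort (singleton_subset_iff.mpr ha) (card_singleton a).le

theorem nadd_div_pow_mod {b : ℕ} (hb : 0 < b) {k k' e : ℕ} (he : e ≤ k + k') :
    nadd b k k' / b ^ e % b = (k / b ^ e % b + k' / b ^ e % b) % b :=
  Nat.sum_mul_pow_div_pow_mod hb (fun _ => Nat.mod_lt _ hb) (Nat.lt_succ_of_le he)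

theorem mem_nzpos_nadd {b k k' a : ℕ} (hb : 1 < b) (hk : a ∈ nzpos b k) (hk' : a ∉ nzpos b k') :
    a ∈ nzpos b (nadd b k k') := by
  have hak : a ≤ k := Nat.lt_succ_iff.mp (mem_range.mp (mem_filter.mp hk).1)
  rw [mem_nzpos hb] at hk hk' ⊢
  refine ⟨hk.1, ?_⟩
  rw [nadd_div_pow_mod (by omega) (by omega), not_ne_iff.mp (fun h => hk' ⟨hk.1, h⟩), add_zero,
    Nat.mod_mod]
  exact hk.2

theorem mua_le_mua_nadd_add {b m : ℕ} (hb : 1 < b) (α k k' : ℕ)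
    (hm : ∀ a ∈ nzpos b k', a ≤ m) : mua b α k ≤ mua b α (nadd b k k') + α * m := by
  obtain ⟨Z, hZ, hZα, hZsum⟩ := exists_subset_card_le_sum_eq_sum_take_sort (nzpos b k) α
  have high : ∑ a ∈ Z with m < a, a ≤ mua b α (nadd b k k') :=
    sum_le_sum_take_sort (fun a ha => by
      rw [mem_filter] at ha
      exact mem_nzpos_nadd hb (hZ ha.1) fun h => (hm a h).not_gt ha.2)
      ((card_filter_le _ _).trans hZα)
  have low : ∑ a ∈ Z with ¬ m < a, a ≤ α * m := by
    calc ∑ a ∈ Z with ¬ m < a, a ≤ #{a ∈ Z | ¬ m < a} * m :=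
          sum_le_card_nsmul _ _ _ fun a ha => not_lt.mp (mem_filter.mp ha).2
      _ ≤ α * m := Nat.mul_le_mul_right _ ((card_filter_le _ _).trans hZα)
  have split := sum_filter_add_sum_filter_not Z (m < ·) fun a => a
  change _ = mua b α k at hZsum
  omega

theorem mua_nadd_lower_bound_general (b α : ℕ) (hb : 2 ≤ b) (k k' : ℕ) :
    ((mua b α k : ℤ) - (α : ℤ) * (mua b 1 k' : ℤ) ≤ (mua b α (nadd b k k') : ℤ)) ∧
    ∀ ν : ℕ, k' < b ^ ν →
      (mua b α k : ℤ) - (α : ℤ) * (ν : ℤ) ≤ (mua b α (nadd b k k') : ℤ) := by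
  refine ⟨?_, fun ν hν => ?_⟩
  · have := mua_le_mua_nadd_add hb α k k' fun _ => le_mua_one_of_mem_nzpos
    omega
  · have := mua_le_mua_nadd_add hb α k k' fun _ ha => le_of_mem_nzpos_of_lt_pow hb ha hν
    omega

/-- `μ_α(k ⊕_b k') ≥ μ_α(k) - α μ_1(k')`; in particular, if `k' < b^ν` then
`μ_α(k ⊕_b k') ≥ μ_α(k) - α ν`. -/
theorem mua_nadd_lower_bound (b α : ℕ) (hb : 2 ≤ b) (hα : 1 ≤ α) (k k' : ℕ) :
    ((mua b α k : ℤ) - (α : ℤ) * (mua b 1 k' : ℤ) ≤ (mua b α (nadd b k k') : ℤ)) ∧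
    ∀ ν : ℕ, k' < b ^ ν →
      (mua b α k : ℤ) - (α : ℤ) * (ν : ℤ) ≤ (mua b α (nadd b k k') : ℤ) :=
  mua_nadd_lower_bound_general b α hb k k'
end
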